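/- For every n ≥ 1, Σ_{t=1}^{n} S_n(t)/t = 1/n + Σ_{m=1}^{n-1} (n-m)!/(m·n!), where S_n(t) := Σ_{k=1}^{t} A(n,k)/n!. -/

import Mathlib

/-!
Write `n = N + 1` and `H` for the harmonic numbers. Exchanging the order of summation turns the
left side into `∑ j ≤ N, C(N, j) A(j) (H (N + 1) - H j) / (N + 1)!`. Two identities finish it:
the row sums `∑ j, C(M, j) A(j) = (M + 1)!`, which follow by induction on `M` together with
`∑ j, C(M, j) A(j + 1) = (M + 1) (M + 1)!`, and
`C(N, j) (H N - H j) = ∑ m ∈ [1, N], C(N - m, j) / m`, an induction on Pascal's rule.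
The term `1 / (N + 1)` of `H (N + 1) - H j` then contributes `1 / n`, and after exchanging the
sums once more the rest contributes `∑ m, (N + 1 - m)! / (m (N + 1)!)`.
-/

open Finset Filter

/-- Sequence A000255: A(0)=A(1)=1, A(n)=n·A(n-1)+(n-1)·A(n-2). -/
def A : ℕ → ℕ
  | 0 => 1
  | 1 => 1
  | n + 2 => (n + 2) * A (n + 1) + (n + 1) * A n

/-- A(n,k) := C(n-1,k-1)·A(k-1). -/
def Ank (n k : ℕ) : ℕ := Nat.choose (n - 1) (k - 1) * A (k - 1)

open Nat

theorem sum_range_succ_choose_mul (f : ℕ → ℕ) (N : ℕ) :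
    ∑ k ∈ range (N + 2), (N + 1).choose k * f k =
      ∑ k ∈ range (N + 1), N.choose k * f k + ∑ k ∈ range (N + 1), N.choose k * f (k + 1) := by
  have shift : ∑ k ∈ range (N + 1), N.choose (k + 1) * f (k + 1) + f 0 =
      ∑ k ∈ range (N + 1), N.choose k * f k := by
    rw [sum_range_succ, choose_succ_self, zero_mul, add_zero, sum_range_succ' _ N,
      choose_zero_right, one_mul]
  rw [sum_range_succ', choose_zero_right, one_mul, ← shift]
  simp only [choose_succ_succ', add_mul, sum_add_distrib]
  ring

theorem sum_range_succ_mul_choose_mul (f : ℕ → ℕ) (N : ℕ) :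
    ∑ k ∈ range (N + 2), k * (N + 1).choose k * f k =
      (N + 1) * ∑ k ∈ range (N + 1), N.choose k * f (k + 1) := by
  rw [sum_range_succ', mul_sum]
  refine (add_eq_left.mpr (by simp)).trans (sum_congr rfl fun k _ => ?_)
  rw [mul_comm (k + 1), ← add_one_mul_choose_eq, mul_assoc]

theorem A_succ (k : ℕ) : A (k + 1) = (k + 1) * A k + k * A (k - 1) := by
  cases k with
  | zero => rfl
  | succ k => rfl

theorem sum_choose_mul_A_and_succ (N : ℕ) :
    ∑ k ∈ range (N + 1), N.choose k * A k = (N + 1)! ∧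
      ∑ k ∈ range (N + 1), N.choose k * A (k + 1) = (N + 1) * (N + 1)! := by
  induction N with
  | zero => simp [A]
  | succ N ih =>
    obtain ⟨hS, hT⟩ := ih
    have hS' : ∑ k ∈ range (N + 2), (N + 1).choose k * A k = (N + 2)! := by
      rw [sum_range_succ_choose_mul, hS, hT, factorial_succ (N + 1)]; ring
    refine ⟨hS', ?_⟩
    have expand : ∀ k, (N + 1).choose k * A (k + 1) = (N + 1).choose k * A k +
        k * (N + 1).choose k * A k + k * (N + 1).choose k * A (k - 1) := by
      intro k; rw [A_succ]; ring
    simp only [expand, sum_add_distrib, sum_range_succ_mul_choose_mul, add_tsub_cancel_right,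
      hS', hS, hT, factorial_succ (N + 1)]
    ring

theorem sum_choose_mul_A_of_le {N M : ℕ} (h : N ≤ M) :
    ∑ k ∈ range (M + 1), N.choose k * A k = (N + 1)! := by
  rw [← (sum_choose_mul_A_and_succ N).1]
  refine (sum_subset (range_subset_range.mpr (by omega)) fun k _ hk => ?_).symm
  rw [choose_eq_zero_of_lt (by simpa using hk), zero_mul]

section HarmonicSums

variable {K : Type*} [Field K] [CharZero K]

theorem sum_Icc_choose_sub_div (N j : ℕ) :
    ∑ m ∈ Icc 1 N, ((N - m).choose j : K) / m = N.choose j * (harmonic N - harmonic j : ℚ) := by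
  induction N generalizing j with
  | zero => cases j <;> simp
  | succ N ih =>
    cases j with
    | zero => simp [harmonic_eq_sum_Icc, div_eq_mul_inv, sum_Icc_succ_top]
    | succ j =>
      have pascal : ∑ m ∈ Icc 1 (N + 1), ((N + 1 - m).choose (j + 1) : K) / m =
          ∑ m ∈ Icc 1 N, ((N - m).choose j : K) / m +
            ∑ m ∈ Icc 1 N, ((N - m).choose (j + 1) : K) / m := by
        rw [sum_Icc_succ_top (by omega), ← sum_add_distrib, Nat.sub_self, choose_zero_succ,
          cast_zero, zero_div, add_zero]
        refine sum_congr rfl fun m hm => ?_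
        rw [Nat.sub_add_comm (mem_Icc.mp hm).2, choose_succ_succ', cast_add, add_div]
      have absorb : ((N + 1 : ℕ) : K) * N.choose j = (j + 1 : ℕ) * (N + 1).choose (j + 1) := by
        rw [← cast_mul, ← cast_mul, add_one_mul_choose_eq, mul_comm]
      rw [pascal, ih, ih, harmonic_succ, harmonic_succ]
      rw [choose_succ_succ' N j] at absorb ⊢
      push_cast at absorb ⊢
      field_simp
      linear_combination absorb

theorem sum_Icc_sum_Icc_div (f : ℕ → K) (n : ℕ) :
    ∑ t ∈ Icc 1 n, (∑ k ∈ Icc 1 t, f k) / t =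
      ∑ j ∈ range n, f (j + 1) * (harmonic n - harmonic j : ℚ) := by
  induction n with
  | zero => simp
  | succ n ih =>
    have shift : ∑ k ∈ Icc 1 (n + 1), f k = ∑ j ∈ range (n + 1), f (j + 1) := by
      rw [range_eq_Ico, sum_Ico_add' f 0 (n + 1) 1, zero_add, Ico_add_one_right_eq_Icc]
    have split : ∀ j, f (j + 1) * ((harmonic (n + 1) - harmonic j : ℚ) : K) =
        f (j + 1) * (harmonic n - harmonic j : ℚ) + f (j + 1) / (n + 1 : ℕ) := by
      intro j; push_cast [harmonic_succ]; ring
    rw [sum_Icc_succ_top (by omega), ih, shift, sum_div]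
    simp only [split, sum_add_distrib]
    rw [sum_range_succ (fun j => f (j + 1) * ((harmonic n - harmonic j : ℚ) : K)), sub_self,
      Rat.cast_zero, mul_zero, add_zero]

theorem sum_choose_mul_A_mul_harmonic_sub (N : ℕ) :
    ∑ j ∈ range (N + 1), (N.choose j * A j : K) * (harmonic N - harmonic j : ℚ) =
      ∑ m ∈ Icc 1 N, ((N + 1 - m)! : K) / m := by
  calc ∑ j ∈ range (N + 1), (N.choose j * A j : K) * (harmonic N - harmonic j : ℚ)
      = ∑ j ∈ range (N + 1), (A j : K) * ∑ m ∈ Icc 1 N, ((N - m).choose j : K) / m := by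
        refine sum_congr rfl fun j _ => ?_
        rw [sum_Icc_choose_sub_div]; ring
    _ = ∑ m ∈ Icc 1 N, ∑ j ∈ range (N + 1), ((N - m).choose j * A j : K) / m := by
        simp only [mul_sum]
        rw [sum_comm]
        exact sum_congr rfl fun m _ => sum_congr rfl fun j _ => by ring
    _ = ∑ m ∈ Icc 1 N, ((∑ j ∈ range (N + 1), (N - m).choose j * A j : ℕ) : K) / m := by
        push_cast
        simp only [sum_div]
    _ = ∑ m ∈ Icc 1 N, ((N + 1 - m)! : K) / m := by
        refine sum_congr rfl fun m hm => ?_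
        rw [sum_choose_mul_A_of_le (Nat.sub_le N m), ← Nat.sub_add_comm (mem_Icc.mp hm).2]

end HarmonicSums

theorem stmt13 (n : ℕ) (hn : 1 ≤ n) :
    ∑ t ∈ Finset.Icc 1 n,
        (∑ k ∈ Finset.Icc 1 t, (Ank n k : ℝ) / (Nat.factorial n)) / t =
      1 / n + ∑ m ∈ Finset.Icc 1 (n - 1), (Nat.factorial (n - m) : ℝ) / (m * Nat.factorial n) := by
  obtain ⟨N, rfl⟩ : ∃ N, n = N + 1 := ⟨n - 1, by omega⟩
  have row : ∑ j ∈ range (N + 1), (N.choose j * A j : ℝ) = (N + 1)! := by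
    exact_mod_cast (sum_choose_mul_A_and_succ N).1
  have weight : ∀ j, (N.choose j * A j : ℝ) / (N + 1)! * ((harmonic (N + 1) - harmonic j : ℚ) : ℝ) =
      (N.choose j * A j : ℝ) / ((N + 1)! * (N + 1 : ℕ)) +
        (N.choose j * A j : ℝ) * (harmonic N - harmonic j : ℚ) / (N + 1)! := by
    intro j; push_cast [harmonic_succ]; field_simp; ring
  rw [sum_Icc_sum_Icc_div]
  simp only [Ank, add_tsub_cancel_right, cast_mul, weight, sum_add_distrib, ← sum_div, row,
    sum_choose_mul_A_mul_harmonic_sub]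
  rw [div_mul_cancel_left₀ (by positivity), one_div, sum_div]
  simp only [div_div]
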